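/- arXiv:1112.3663 — 3 statements merged into one kernel-verified Lean document; each statement's English description precedes it below -/
import Mathlib

section
/- Let f be a nonnegative continuous solution of ∂_t f = f(αM₁(f)+β)(p−M₁(f)) on [0,1] with unit mass. Then M₁(t) := M₁(f(t,·)) satisfies the ODE M₁'(t) = (αM₁(t)+β)(M₂(t) − M₁(t)²), where M₂(t) = ∫₀¹ p² f(t,p)dp. -/
open MeasureTheory intervalIntegral

/-!
Differentiate `M₁ t = ∫ p f(t,p)` under the integral sign. Since `M₁` is continuous in `t`, the
integrand's `t`-derivative `p f (α M₁ + β)(p − M₁)` is jointly continuous, hence bounded on a compact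
neighbourhood of `t × [0,1]`, which is the domination the Leibniz rule needs. The resulting integral
is `(α M₁ + β)(M₂ − M₁ · M₁)` by linearity.
-/

theorem hasDerivAt_intervalIntegral_of_continuous_uncurry_deriv
    {E : Type*} [NormedAddCommGroup E] [NormedSpace ℝ E] [CompleteSpace E]
    {F F' : ℝ → ℝ → E} {a b t₀ : ℝ}
    (hF : ∀ t, Continuous (F t)) (hF' : Continuous (Function.uncurry F'))
    (hderiv : ∀ t, ∀ p ∈ Set.uIcc a b, HasDerivAt (F · p) (F' t p) t) :
    HasDerivAt (fun t => ∫ p in a..b, F t p) (∫ p in a..b, F' t₀ p) t₀ := by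
  obtain ⟨C, hC⟩ : ∃ C, ∀ q ∈ Metric.closedBall t₀ 1 ×ˢ Set.uIcc a b, ‖F' q.1 q.2‖ ≤ C :=
    ((isCompact_closedBall t₀ 1).prod isCompact_uIcc).exists_bound_of_continuousOn
      hF'.continuousOn
  have hF'_t₀ : Continuous (F' t₀) := hF'.comp (Continuous.prodMk_right t₀)
  refine (hasDerivAt_integral_of_dominated_loc_of_deriv_le (bound := fun _ => C)
    (Metric.closedBall_mem_nhds t₀ one_pos)
    (.of_forall fun t => (hF t).aestronglyMeasurable) ((hF t₀).intervalIntegrable a b)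
    hF'_t₀.aestronglyMeasurable ?_ intervalIntegrable_const ?_).2
  · exact .of_forall fun p hp t ht => hC (t, p) ⟨ht, Set.uIoc_subset_uIcc hp⟩
  · exact .of_forall fun p hp t _ => hderiv t p (Set.uIoc_subset_uIcc hp)

theorem intervalIntegral_mul_mul_sub {g : ℝ → ℝ} (hg : Continuous g) (a b c m : ℝ) :
    ∫ p in a..b, p * (g p * (c * (p - m))) =
      c * ((∫ p in a..b, p ^ 2 * g p) - m * ∫ p in a..b, p * g p) := by
  have h₂ : IntervalIntegrable (fun p => p ^ 2 * g p) volume a b := by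
    apply Continuous.intervalIntegrable; fun_prop
  have h₁ : IntervalIntegrable (fun p => p * g p) volume a b := by
    apply Continuous.intervalIntegrable; fun_prop
  rw [← intervalIntegral.integral_const_mul, ← integral_sub h₂ (h₁.const_mul m),
    ← intervalIntegral.integral_const_mul]
  congr 1 with p
  ring

theorem first_moment_ode_general
    (α β : ℝ) (f : ℝ → ℝ → ℝ) (M₁ M₂ : ℝ → ℝ)
    (hcont : Continuous fun q : ℝ × ℝ => f q.1 q.2)
    (hM₁ : ∀ t, M₁ t = ∫ p in (0:ℝ)..1, p * f t p)
    (hM₂ : ∀ t, M₂ t = ∫ p in (0:ℝ)..1, p ^ 2 * f t p)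
    (hode : ∀ t, ∀ p ∈ Set.Icc (0:ℝ) 1,
      HasDerivAt (fun s => f s p)
        (f t p * ((α * M₁ t + β) * (p - M₁ t))) t) :
    ∀ t, HasDerivAt M₁ ((α * M₁ t + β) * (M₂ t - (M₁ t) ^ 2)) t := by
  intro t₀
  have hf : Continuous (Function.uncurry f) := hcont
  have hM₁_eq : M₁ = fun t => ∫ p in (0:ℝ)..1, p * f t p := funext hM₁
  have hM₁_cont : Continuous M₁ := by
    rw [hM₁_eq]
    exact continuous_parametric_intervalIntegral_of_continuous' (by fun_prop) 0 1
  have hderiv := hasDerivAt_intervalIntegral_of_continuous_uncurry_deriv (t₀ := t₀)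
    (F := fun t p => p * f t p)
    (F' := fun t p => p * (f t p * ((α * M₁ t + β) * (p - M₁ t))))
    (fun t => by fun_prop) (by fun_prop)
    (fun t p hp => (hode t p (by rwa [Set.uIcc_of_le zero_le_one] at hp)).const_mul p)
  rw [← hM₁_eq, intervalIntegral_mul_mul_sub (by fun_prop), ← hM₁, ← hM₂] at hderiv
  rwa [sq]

/-- The first moment of a nonnegative continuous unit-mass solution of the
two-strategy replicator equation satisfies
`M₁'(t) = (α M₁(t) + β)(M₂(t) − M₁(t)²)`. -/
theorem first_moment_ode
    (α β : ℝ) (f : ℝ → ℝ → ℝ) (M₁ M₂ : ℝ → ℝ)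
    (hcont : Continuous fun q : ℝ × ℝ => f q.1 q.2)
    (hnonneg : ∀ t, ∀ p ∈ Set.Icc (0:ℝ) 1, 0 ≤ f t p)
    (hmass : ∀ t, (∫ p in (0:ℝ)..1, f t p) = 1)
    (hM₁ : ∀ t, M₁ t = ∫ p in (0:ℝ)..1, p * f t p)
    (hM₂ : ∀ t, M₂ t = ∫ p in (0:ℝ)..1, p ^ 2 * f t p)
    (hode : ∀ t, ∀ p ∈ Set.Icc (0:ℝ) 1,
      HasDerivAt (fun s => f s p)
        (f t p * ((α * M₁ t + β) * (p - M₁ t))) t) :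
    ∀ t, HasDerivAt M₁ ((α * M₁ t + β) * (M₂ t - (M₁ t) ^ 2)) t :=
  first_moment_ode_general α β f M₁ M₂ hcont hM₁ hM₂ hode
end

section
/- If f̄ is a probability density on [0,1] which is continuous and strictly positive on a nonempty open subinterval, then its variance M₂(f̄) − M₁(f̄)² is strictly positive; consequently there is no continuous stationary solution with M₁ = −β/α ∈ (0,1) for which the linearized perturbation moment M₁(g)(t) = M₁(g)(0)·e^{t·N₁(f̄)} remains bounded for all initial perturbations. -/
/-!
The variance of `f̄` is `∫ (p - M₁)² f̄ p`, the integral of a nonnegative function which is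
strictly positive on whichever half of the subinterval `(a, b)` does not contain `M₁`.
Hence `N₁ > 0`, and the perturbation moment `e^{t N₁}` grows without bound.
-/

open MeasureTheory intervalIntegral Set

section DenselyOrdered

variable {α : Type*} [LinearOrder α] [DenselyOrdered α]

lemma le_and_le_of_Ioo_subset_Icc [TopologicalSpace α] [OrderTopology α] {a b c d : α}
    (hcd : c < d) (hsub : Ioo c d ⊆ Icc a b) : a ≤ c ∧ d ≤ b := by
  have : Icc c d ⊆ Icc a b := by
    simpa only [closure_Ioo hcd.ne] using closure_minimal hsub isClosed_Icc
  exact (Icc_subset_Icc_iff hcd.le).1 this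

lemma exists_Ioo_subset_notMem_Ioo {a b : α} (hab : a < b) (m : α) :
    ∃ c d, c < d ∧ Ioo c d ⊆ Ioo a b ∧ m ∉ Ioo c d := by
  obtain ⟨e, hae, heb⟩ := exists_between hab
  rcases le_or_gt e m with hm | hm
  · exact ⟨a, e, hae, Ioo_subset_Ioo_right heb.le, fun h => (h.2.trans_le hm).false⟩
  · exact ⟨e, b, heb, Ioo_subset_Ioo_left hae.le, fun h => (hm.trans h.1).false⟩

end DenselyOrdered

lemma intervalIntegral_pos_of_pos_on_Ioo_subset {f : ℝ → ℝ} {a b c d : ℝ}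
    (hf : IntervalIntegrable f volume a b) (hnonneg : ∀ x ∈ Icc a b, 0 ≤ f x)
    (hcd : c < d) (hsub : Ioo c d ⊆ Icc a b) (hpos : ∀ x ∈ Ioo c d, 0 < f x) :
    0 < ∫ x in a..b, f x := by
  obtain ⟨hac, hdb⟩ := le_and_le_of_Ioo_subset_Icc hcd hsub
  have hab : a ≤ b := hac.trans (hcd.le.trans hdb)
  calc 0 < ∫ x in c..d, f x :=
        intervalIntegral_pos_of_pos_on
          (hf.mono_set (by rw [uIcc_of_le hab, uIcc_of_le hcd.le]; exact Icc_subset_Icc hac hdb))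
          hpos hcd
    _ ≤ ∫ x in a..b, f x := by
        refine integral_mono_interval hac hcd.le hdb ?_ hf
        filter_upwards [ae_restrict_mem measurableSet_Ioc] with x hx
        exact hnonneg x (Ioc_subset_Icc_self hx)

lemma integral_sq_sub_mul_eq {f : ℝ → ℝ} {a b : ℝ} (hf : IntervalIntegrable f volume a b)
    (m : ℝ) :
    ∫ x in a..b, (x - m) ^ 2 * f x =
      (∫ x in a..b, x ^ 2 * f x) - 2 * m * (∫ x in a..b, x * f x) +
        m ^ 2 * ∫ x in a..b, f x := by
  have h₁ : IntervalIntegrable (fun x => x * f x) volume a b :=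
    hf.continuousOn_mul continuousOn_id
  have h₂ : IntervalIntegrable (fun x => x ^ 2 * f x) volume a b :=
    hf.continuousOn_mul (continuous_pow 2).continuousOn
  calc ∫ x in a..b, (x - m) ^ 2 * f x
      = ∫ x in a..b, (x ^ 2 * f x - 2 * m * (x * f x)) + m ^ 2 * f x := by
        congr 1; ext x; ring
    _ = _ := by
        rw [integral_add (h₂.sub (h₁.const_mul _)) (hf.const_mul _),
          integral_sub h₂ (h₁.const_mul _), intervalIntegral.integral_const_mul,
          intervalIntegral.integral_const_mul]

lemma integral_sq_sub_mul_pos {f : ℝ → ℝ} {a b c d : ℝ}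
    (hf : IntervalIntegrable f volume a b) (hnonneg : ∀ x ∈ Icc a b, 0 ≤ f x)
    (hcd : c < d) (hsub : Ioo c d ⊆ Icc a b) (hpos : ∀ x ∈ Ioo c d, 0 < f x) (m : ℝ) :
    0 < ∫ x in a..b, (x - m) ^ 2 * f x := by
  obtain ⟨c', d', hcd', hsub', hm⟩ := exists_Ioo_subset_notMem_Ioo hcd m
  refine intervalIntegral_pos_of_pos_on_Ioo_subset (hf.continuousOn_mul (by fun_prop))
    (fun x hx => mul_nonneg (sq_nonneg _) (hnonneg x hx)) hcd' (hsub'.trans hsub) fun x hx => ?_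
  have hxm : x - m ≠ 0 := sub_ne_zero.2 fun h => hm (h ▸ hx)
  exact mul_pos (sq_pos_of_ne_zero hxm) (hpos x (hsub' hx))

lemma not_bddAbove_exp_mul_image_Ici {N : ℝ} (hN : 0 < N) :
    ¬ BddAbove ((fun t : ℝ => Real.exp (t * N)) '' Ici 0) := by
  rw [not_bddAbove_iff]
  intro M
  refine ⟨_, ⟨max M 0 / N, div_nonneg (le_max_right _ _) hN.le, rfl⟩, ?_⟩
  change M < Real.exp (max M 0 / N * N)
  rw [div_mul_cancel₀ _ hN.ne']
  linarith [Real.add_one_le_exp (max M 0), le_max_left M 0]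

theorem no_linearly_stable_continuous_stationary_general
    (fbar : ℝ → ℝ)
    (hnonneg : ∀ p ∈ Set.Icc (0:ℝ) 1, 0 ≤ fbar p)
    (hint : IntervalIntegrable fbar volume 0 1)
    (hmass : (∫ p in (0:ℝ)..1, fbar p) = 1)
    (a b : ℝ) (hab : a < b) (hsub : Set.Ioo a b ⊆ Set.Icc (0:ℝ) 1)
    (hposf : ∀ p ∈ Set.Ioo a b, 0 < fbar p)
    (N₁ : ℝ)
    (hN₁ : N₁ = (∫ p in (0:ℝ)..1, p ^ 2 * fbar p) -
      (∫ p in (0:ℝ)..1, p * fbar p) ^ 2) :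
    0 < N₁ ∧
      ∃ c : ℝ, ¬ BddAbove ((fun t : ℝ => c * Real.exp (t * N₁)) '' Set.Ici 0) := by
  set m := ∫ p in (0:ℝ)..1, p * fbar p
  have hvar : N₁ = ∫ p in (0:ℝ)..1, (p - m) ^ 2 * fbar p := by
    rw [integral_sq_sub_mul_eq hint, hmass, hN₁]; ring
  have hN₁pos : 0 < N₁ := hvar ▸ integral_sq_sub_mul_pos hint hnonneg hab hsub hposf m
  exact ⟨hN₁pos, 1, by simpa only [one_mul] using not_bddAbove_exp_mul_image_Ici hN₁pos⟩

/-- A probability density on `[0,1]` which is continuous and strictly positive on a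
nonempty open subinterval has strictly positive variance; consequently for a Type I
stationary state the linearized perturbation moment `c·e^{t N₁}` cannot remain
bounded for every initial perturbation value `c`. -/
theorem no_linearly_stable_continuous_stationary
    (fbar : ℝ → ℝ)
    (hnonneg : ∀ p ∈ Set.Icc (0:ℝ) 1, 0 ≤ fbar p)
    (hint : IntervalIntegrable fbar volume 0 1)
    (hmass : (∫ p in (0:ℝ)..1, fbar p) = 1)
    (a b : ℝ) (hab : a < b) (hsub : Set.Ioo a b ⊆ Set.Icc (0:ℝ) 1)
    (hcont : ContinuousOn fbar (Set.Ioo a b))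
    (hposf : ∀ p ∈ Set.Ioo a b, 0 < fbar p)
    (N₁ : ℝ)
    (hN₁ : N₁ = (∫ p in (0:ℝ)..1, p ^ 2 * fbar p) -
      (∫ p in (0:ℝ)..1, p * fbar p) ^ 2) :
    0 < N₁ ∧
      ∃ c : ℝ, ¬ BddAbove ((fun t : ℝ => c * Real.exp (t * N₁)) '' Set.Ici 0) :=
  no_linearly_stable_continuous_stationary_general fbar hnonneg hint hmass a b hab hsub hposf N₁ hN₁
end

section
/- The quadratic Hawk–Dove stationary solution f₀(p) = −p² + (2/3)p + 1 has strictly positive variance: M₂(f₀) − M₁(f₀)² = ∫₀¹ (−p³ + (2/3)p² + p)(p − 17/36) dp > 0 (its value is approximately 0.07). Consequently f₀ is not linearly stable. -/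
/-!
Termwise integration gives the moments `M₁(f₀) = 17/36` and `M₂(f₀) = 3/10`. For any `c`,
`∫ p f₀(p) (p - c) = M₂ - c M₁`, which for `c = 17/36 = M₁` is `M₂ - M₁²`; its value is
`3/10 - (17/36)² = 499/6480 > 0`.
-/

open intervalIntegral MeasureTheory

theorem integral_unitInterval_polynomial {n : ℕ} (c : Fin n → ℝ) :
    ∫ p in (0:ℝ)..1, ∑ i, c i * p ^ (i : ℕ) = ∑ i, c i / ((i : ℕ) + 1) := by
  have hint (i : Fin n) : IntervalIntegrable (fun p : ℝ => c i * p ^ (i : ℕ)) volume 0 1 :=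
    (by fun_prop : Continuous _).intervalIntegrable _ _
  rw [integral_finsetSum fun i _ => hint i]
  simp [integral_pow, div_eq_mul_inv]

theorem integral_mul_mul_sub_eq {a b : ℝ} (c : ℝ) {f : ℝ → ℝ}
    (h₁ : IntervalIntegrable (fun p => p * f p) volume a b)
    (h₂ : IntervalIntegrable (fun p => p ^ 2 * f p) volume a b) :
    ∫ p in a..b, p * f p * (p - c) = (∫ p in a..b, p ^ 2 * f p) - c * ∫ p in a..b, p * f p := by
  have hexpand : (fun p => p * f p * (p - c)) = fun p => p ^ 2 * f p - c * (p * f p) := by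
    funext p; ring
  rw [hexpand, integral_sub h₂ (h₁.const_mul c), intervalIntegral.integral_const_mul]

noncomputable def hawkDoveStationary (p : ℝ) : ℝ := -p ^ 2 + (2 / 3) * p + 1

theorem continuous_hawkDoveStationary : Continuous hawkDoveStationary := by
  unfold hawkDoveStationary; fun_prop

theorem integral_mul_hawkDoveStationary :
    ∫ p in (0:ℝ)..1, p * hawkDoveStationary p = 17 / 36 := by
  calc ∫ p in (0:ℝ)..1, p * hawkDoveStationary p
      = ∫ p in (0:ℝ)..1, ∑ i, ![0, 1, 2 / 3, -1] i * p ^ (i : ℕ) := by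
        congr 1 with p; simp [Fin.sum_univ_succ, hawkDoveStationary]; ring
    _ = 17 / 36 := by
        rw [integral_unitInterval_polynomial]; simp [Fin.sum_univ_succ]; norm_num

theorem integral_sq_mul_hawkDoveStationary :
    ∫ p in (0:ℝ)..1, p ^ 2 * hawkDoveStationary p = 3 / 10 := by
  calc ∫ p in (0:ℝ)..1, p ^ 2 * hawkDoveStationary p
      = ∫ p in (0:ℝ)..1, ∑ i, ![0, 0, 1, 2 / 3, -1] i * p ^ (i : ℕ) := by
        congr 1 with p; simp [Fin.sum_univ_succ, hawkDoveStationary]; ring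
    _ = 3 / 10 := by
        rw [integral_unitInterval_polynomial]; simp [Fin.sum_univ_succ]; norm_num

/-- The Hawk–Dove quadratic stationary solution `f₀(p) = −p² + (2/3)p + 1` has
strictly positive variance:
`M₂(f₀) − M₁(f₀)² = ∫₀¹ (−p³ + (2/3)p² + p)(p − 17/36) dp > 0`. -/
theorem hawk_dove_quadratic_positive_variance :
    let f₀ : ℝ → ℝ := fun p => -p ^ 2 + (2 / 3) * p + 1
    (∫ p in (0:ℝ)..1, p ^ 2 * f₀ p) - (∫ p in (0:ℝ)..1, p * f₀ p) ^ 2 =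
      (∫ p in (0:ℝ)..1, (-p ^ 3 + (2 / 3) * p ^ 2 + p) * (p - 17 / 36)) ∧
    0 < ∫ p in (0:ℝ)..1, (-p ^ 3 + (2 / 3) * p ^ 2 + p) * (p - 17 / 36) := by
  change (∫ p in (0:ℝ)..1, p ^ 2 * hawkDoveStationary p) -
    (∫ p in (0:ℝ)..1, p * hawkDoveStationary p) ^ 2 = _ ∧ _
  have hintegrand : (fun p : ℝ => (-p ^ 3 + (2 / 3) * p ^ 2 + p) * (p - 17 / 36)) =
      fun p => p * hawkDoveStationary p * (p - 17 / 36) := by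
    funext p; unfold hawkDoveStationary; ring
  have hf := continuous_hawkDoveStationary
  rw [hintegrand, integral_mul_mul_sub_eq _ ((continuous_id.mul hf).intervalIntegrable _ _)
      (((continuous_pow 2).mul hf).intervalIntegrable _ _),
    integral_mul_hawkDoveStationary, integral_sq_mul_hawkDoveStationary]
  norm_num
end
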